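/- Let C be a set, H := ℓ²(C), H_k := ℓ²(C^k), and R_k := {r₁⊗⋯⊗r_k : r₁,…,r_k ∈ B(H)}. Let F be a finite simple graph, let h = (h_v)_{v∈V(F)} with h_v ∈ H_{deg(v)}^{S_{deg(v)}} for each v, and let u ∈ V(F). Then π_F(h) ≤ ‖h_u‖_{R_{deg(u)}} · ∏_{v∈V(F), v≠u} ‖h_v‖, where π_F(h) := Σ_{φ:E(F)→C} ∏_{v∈V(F)} h_v(φ(δ(v))). -/

import Mathlib

open scoped InnerProductSpace
open Filter

noncomputable section

/-- `ℓ²(C)`, the real Hilbert space of square-summable functions `C → ℝ`. -/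
abbrev l2 (C : Type) : Type := lp (fun _ : C => ℝ) 2

/-- `H_k = ℓ²(C^k)`. -/
abbrev Hk (C : Type) (k : ℕ) : Type := lp (fun _ : (Fin k → C) => ℝ) 2

/-- `S_k`-invariance of an element of `H_k = ℓ²(C^k)` (for the action of `S_k` permuting
the coordinates of `C^k`). -/
def SkInv {C : Type} {k : ℕ} (h : Hk C k) : Prop :=
  ∀ (σ : Equiv.Perm (Fin k)) (c : Fin k → C), h (c ∘ σ) = h c

/-- `B_k`, the closed unit ball of the subspace `H_k^{S_k}` of `S_k`-invariant elements. -/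
def Bk (C : Type) (k : ℕ) : Set (Hk C k) := {x | SkInv x ∧ ‖x‖ ≤ 1}

/-- `R_k`, the set of elementary tensors `r₁ ⊗ ⋯ ⊗ r_k` with each `rᵢ` in the closed unit
ball of `ℓ²(C)`. -/
def Rk (C : Type) (k : ℕ) : Set (Hk C k) :=
  {x | ∃ r : Fin k → l2 C, (∀ i, ‖r i‖ ≤ 1) ∧ ∀ c : Fin k → C, x c = ∏ i, r i (c i)}

/-- The seminorm `‖x‖_R = sup_{r ∈ R} |⟨r,x⟩|`. -/
def normR {H : Type*} [NormedAddCommGroup H] [InnerProductSpace ℝ H] (R : Set H) (x : H) : ℝ :=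
  ⨆ r : R, |⟪(r : H), x⟫_ℝ|

/-- The pseudometric `d_R(x,y) = ‖x - y‖_R`. -/
def dR {H : Type*} [NormedAddCommGroup H] [InnerProductSpace ℝ H] (R : Set H) (x y : H) : ℝ :=
  normR R (x - y)

/-- The topology induced by a pseudometric `d` : the one generated by the open balls of `d`. -/
def ballTopology {X : Type*} (d : X → X → ℝ) : TopologicalSpace X :=
  TopologicalSpace.generateFrom {s | ∃ x ε, 0 < ε ∧ s = {y | d x y < ε}}

/-- `δ` enumerates, for each vertex `v`, the edges of `F` incident with `v` (in some order). -/
def IsEnum {V : Type} [Fintype V] [DecidableEq V] (F : SimpleGraph V) [DecidableRel F.Adj]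
    (δ : ∀ v : V, Fin (F.degree v) → F.edgeSet) : Prop :=
  ∀ v : V, Function.Injective (δ v) ∧
    ∀ e : F.edgeSet, v ∈ (e : Sym2 V) ↔ e ∈ Set.range (δ v)

/-- The partition function `π_F(h) = Σ_{φ : E(F) → C} ∏_{v ∈ V(F)} h_v(φ(δ(v)))`. -/
def piF {C V : Type} [Fintype V] [DecidableEq V] (F : SimpleGraph V) [DecidableRel F.Adj]
    (δ : ∀ v : V, Fin (F.degree v) → F.edgeSet)
    (h : ∀ v : V, Hk C (F.degree v)) : ℝ :=
  ∑' φ : F.edgeSet → C, ∏ v : V, h v (fun i => φ (δ v i))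


/-!
Split an edge assignment `φ : E(F) → C` into its restriction `x` to the edges at `u` and its
restriction `y` to the other edges. Since `F` is simple, each neighbour of `u` shares exactly one
edge with `u`, so for fixed `y` the product `∏_{v ≠ u} h_v` is, as a function of `x`, a scalar
multiple of an elementary tensor; the sum over `x` is therefore at most `‖h_u‖_R` times the
product of the `ℓ²` norms of the slices `x_v ↦ h_v(x_v, y)`. What remains is a partition
function of `F - u` with nonnegative weights, bounded by Finner's inequality
`∑_ψ ∏_v G_v(ψ|δ(v)) ≤ ∏_v ‖G_v‖₂` for loopless multigraphs, and the slice norms of `h_v` have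
`ℓ²` norm `‖h_v‖`. Finner's inequality follows by induction on the vertices: Cauchy–Schwarz in
the edges at one vertex leaves the same situation on the remaining graph, with each `G_v`
replaced by its slice norms.
-/

open scoped ENNReal

theorem ENNReal.tsum_pi_eq_prod_tsum :
    ∀ (J : Type) [Fintype J] (A : J → Type) (f : ∀ j, A j → ℝ≥0∞),
      ∑' g : (∀ j, A j), ∏ j, f j (g j) = ∏ j, ∑' a, f j a := by
  refine Fintype.induction_empty_option ?_ ?_ ?_
  · intro α β _ e ih A f
    let _ : Fintype α := Fintype.ofEquiv β e.symm
    calc ∑' g : (∀ b, A b), ∏ b, f b (g b)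
        = ∑' g : (∀ a, A (e a)), ∏ b, f b (Equiv.piCongrLeft A e g b) :=
          ((Equiv.piCongrLeft A e).tsum_eq _).symm
      _ = ∑' g : (∀ a, A (e a)), ∏ a, f (e a) (g a) := by
          refine tsum_congr fun g => ?_
          rw [← e.prod_comp]
          simp only [Equiv.piCongrLeft_apply_apply]
      _ = ∏ b, ∑' x, f b x := by rw [ih]; exact e.prod_comp fun b => ∑' x, f b x
  · intro A f
    rw [tsum_eq_single (fun x => x.elim) fun g hg => absurd (funext fun x => x.elim) hg]
    simp
  · intro α _ ih A f
    calc ∑' g : (∀ j : Option α, A j), ∏ j, f j (g j)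
        = ∑' c : A none × ∀ a, A (some a), f none c.1 * ∏ a, f (some a) (c.2 a) := by
          rw [← (Equiv.piOptionEquivProd (β := A)).symm.tsum_eq]
          exact tsum_congr fun c => Fintype.prod_option _
      _ = ∏ j : Option α, ∑' x, f j x := by
          rw [ENNReal.tsum_prod (f := fun (x : A none) (g : ∀ a, A (some a)) =>
              f none x * ∏ a, f (some a) (g a)),
            Fintype.prod_option, ← ih, ← ENNReal.tsum_mul_right]
          exact tsum_congr fun x => ENNReal.tsum_mul_left

def eL2Norm {α : Type*} (f : α → ℝ≥0∞) : ℝ≥0∞ := (∑' a, f a ^ 2) ^ (2⁻¹ : ℝ)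

section eL2Norm

variable {α β γ : Type*}

lemma eL2Norm_sq (f : α → ℝ≥0∞) : eL2Norm f ^ 2 = ∑' a, f a ^ 2 := by
  rw [eL2Norm, ← ENNReal.rpow_natCast, ← ENNReal.rpow_mul]
  norm_num

lemma eL2Norm_eq_of_tsum_sq {f : α → ℝ≥0∞} {x : ℝ≥0∞} (h : ∑' a, f a ^ 2 = x ^ 2) :
    eL2Norm f = x := by
  rw [eL2Norm, h, ← ENNReal.rpow_two, ENNReal.rpow_rpow_inv two_ne_zero]

lemma eL2Norm_comp_equiv (e : α ≃ β) (f : β → ℝ≥0∞) : eL2Norm (f ∘ e) = eL2Norm f := by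
  simp only [eL2Norm, Function.comp_apply, e.tsum_eq fun b => f b ^ 2]

lemma eL2Norm_of_unique [Unique α] (f : α → ℝ≥0∞) : eL2Norm f = f default :=
  eL2Norm_eq_of_tsum_sq (tsum_eq_single default fun a ha => absurd (Unique.eq_default a) ha)

lemma eL2Norm_curry (e : γ ≃ α × β) (G : γ → ℝ≥0∞) :
    eL2Norm (fun a => eL2Norm fun b => G (e.symm (a, b))) = eL2Norm G := by
  refine eL2Norm_eq_of_tsum_sq ?_
  simp only [eL2Norm_sq]
  rw [← ENNReal.tsum_prod (f := fun a b => G (e.symm (a, b)) ^ 2),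
    e.symm.tsum_eq fun c => G c ^ 2]

lemma ENNReal.tsum_mul_le_eL2Norm_mul (f g : α → ℝ≥0∞) :
    ∑' a, f a * g a ≤ eL2Norm f * eL2Norm g := by
  let _ : MeasurableSpace α := ⊤
  have hmeas (k : α → ℝ≥0∞) : Measurable k := fun _ _ => trivial
  have H := ENNReal.lintegral_mul_le_Lp_mul_Lq MeasureTheory.Measure.count
    Real.HolderConjugate.two_two (hmeas f).aemeasurable (hmeas g).aemeasurable
  simp only [MeasureTheory.lintegral_count, ENNReal.rpow_two, one_div] at H
  exact H

lemma eL2Norm_pi_prod {J : Type} [Fintype J] {A : J → Type} (f : ∀ j, A j → ℝ≥0∞) :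
    eL2Norm (fun g : ∀ j, A j => ∏ j, f j (g j)) = ∏ j, eL2Norm (f j) := by
  refine eL2Norm_eq_of_tsum_sq ?_
  simp only [← Finset.prod_pow, eL2Norm_sq]
  exact ENNReal.tsum_pi_eq_prod_tsum J A fun j a => f j a ^ 2

lemma eL2Norm_prod_restrict {C D W : Type} (S : Finset W) (r : D → W → Prop)
    (hr : ∀ d, ∃! w, w ∈ S ∧ r d w) (F : ∀ w, ({d // r d w} → C) → ℝ≥0∞) :
    eL2Norm (fun x : D → C => ∏ w ∈ S, F w fun d => x d) = ∏ w ∈ S, eL2Norm (F w) := by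
  choose o ho hunique using hr
  let Θ : (D → C) ≃ (∀ w : S, {d // r d w} → C) :=
    { toFun := fun x w d => x d
      invFun := fun g d => g ⟨o d, (ho d).1⟩ ⟨d, (ho d).2⟩
      left_inv := fun _ => rfl
      right_inv := fun g => by
        funext ⟨w, hw⟩ ⟨d, hd⟩
        obtain rfl := hunique d w ⟨hw, hd⟩
        rfl }
  rw [← Finset.prod_coe_sort S, ← eL2Norm_pi_prod, ← eL2Norm_comp_equiv Θ]
  congr 1
  funext x
  exact (Finset.prod_coe_sort S fun w => F w fun d => x d).symm

end eL2Norm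

section l2

variable {α : Type*}

lemma memℓp_two_iff_eL2Norm_ne_top (f : α → ℝ) :
    Memℓp f 2 ↔ eL2Norm (fun a => ‖f a‖ₑ) ≠ ∞ := by
  have hsq (a : α) : ‖f a‖ₑ ^ 2 = ((‖f a‖₊ ^ 2 : NNReal) : ℝ≥0∞) := by
    rw [enorm_eq_nnnorm, ENNReal.coe_pow]
  rw [memℓp_gen_iff (by norm_num), eL2Norm, ne_eq,
    ENNReal.rpow_eq_top_iff_of_pos (by norm_num), ← ne_eq, tsum_congr hsq,
    ENNReal.tsum_coe_ne_top_iff_summable, ← NNReal.summable_coe]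
  simp

lemma lp.enorm_eq_eL2Norm (f : lp (fun _ : α => ℝ) 2) : ‖f‖ₑ = eL2Norm (fun a => ‖f a‖ₑ) := by
  have h := lp.hasSum_norm (p := 2) (by norm_num) f
  simp only [ENNReal.toReal_ofNat, Real.rpow_two] at h
  refine (eL2Norm_eq_of_tsum_sq ?_).symm
  simp only [← ofReal_norm, ← ENNReal.ofReal_pow (norm_nonneg _)]
  rw [← ENNReal.ofReal_tsum_of_nonneg (fun a => by positivity) h.summable, h.tsum_eq]

end l2

lemma Real.enorm_finset_prod {ι : Type*} (s : Finset ι) (f : ι → ℝ) :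
    ‖∏ i ∈ s, f i‖ₑ = ∏ i ∈ s, ‖f i‖ₑ := by
  simp only [enorm_eq_nnnorm, nnnorm_prod, ENNReal.ofNNReal_finsetProd]

section tensor

variable {α : Type} {k : ℕ}

lemma eL2Norm_enorm_tensor (r : Fin k → lp (fun _ : α => ℝ) 2) :
    eL2Norm (fun c : Fin k → α => ‖∏ i, r i (c i)‖ₑ) = ∏ i, ‖r i‖ₑ := by
  simp only [Real.enorm_finset_prod, lp.enorm_eq_eL2Norm]
  exact eL2Norm_pi_prod (A := fun _ => α) fun i a => ‖r i a‖ₑ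

def tensorLp (r : Fin k → lp (fun _ : α => ℝ) 2) : lp (fun _ : Fin k → α => ℝ) 2 :=
  ⟨fun c => ∏ i, r i (c i), (memℓp_two_iff_eL2Norm_ne_top _).2 <| by
    rw [eL2Norm_enorm_tensor]
    exact ENNReal.prod_ne_top fun i _ => enorm_ne_top⟩

lemma tensorLp_apply (r : Fin k → lp (fun _ : α => ℝ) 2) (c : Fin k → α) :
    tensorLp r c = ∏ i, r i (c i) := rfl

lemma norm_tensorLp (r : Fin k → lp (fun _ : α => ℝ) 2) : ‖tensorLp r‖ = ∏ i, ‖r i‖ := by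
  rw [← toReal_enorm, lp.enorm_eq_eL2Norm]
  simp only [tensorLp_apply, eL2Norm_enorm_tensor, ENNReal.toReal_prod, toReal_enorm]

lemma norm_le_one_of_mem_Rk {C : Type} {x : Hk C k} (hx : x ∈ Rk C k) : ‖x‖ ≤ 1 := by
  obtain ⟨r, hr1, hr⟩ := hx
  rw [show x = tensorLp r from lp.ext (funext hr), norm_tensorLp]
  exact Finset.prod_le_one (fun i _ => norm_nonneg _) fun i _ => hr1 i

lemma normR_nonneg {H : Type*} [NormedAddCommGroup H] [InnerProductSpace ℝ H] (R : Set H)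
    (x : H) : 0 ≤ normR R x :=
  Real.iSup_nonneg fun _ => abs_nonneg _

lemma abs_inner_le_normR {C : Type} (x : Hk C k) {r : Hk C k} (hr : r ∈ Rk C k) :
    |⟪r, x⟫_ℝ| ≤ normR (Rk C k) x := by
  refine le_ciSup (f := fun r : Rk C k => |⟪(r : Hk C k), x⟫_ℝ|) ⟨‖x‖, ?_⟩ ⟨r, hr⟩
  rintro _ ⟨r, rfl⟩
  calc |⟪(r : Hk C k), x⟫_ℝ| ≤ ‖(r : Hk C k)‖ * ‖x‖ := abs_real_inner_le_norm _ _
    _ ≤ ‖x‖ := mul_le_of_le_one_left (norm_nonneg x) (norm_le_one_of_mem_Rk r.2)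

lemma abs_inner_tensorLp_le {C : Type} (x : Hk C k) (r : Fin k → l2 C) :
    |⟪tensorLp r, x⟫_ℝ| ≤ normR (Rk C k) x * ∏ i, ‖r i‖ := by
  by_cases hr : ∃ i, r i = 0
  · obtain ⟨i, hi⟩ := hr
    have : tensorLp r = 0 := lp.ext <| funext fun c =>
      Finset.prod_eq_zero (Finset.mem_univ i) (by simp [hi])
    rw [this, inner_zero_left, abs_zero]
    exact mul_nonneg (normR_nonneg _ x) (by positivity)
  push Not at hr
  have hnorm (i : Fin k) : ‖r i‖ ≠ 0 := norm_ne_zero_iff.2 (hr i)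
  let r₁ : Fin k → l2 C := fun i => ‖r i‖⁻¹ • r i
  have hr₁ : tensorLp r₁ ∈ Rk C k :=
    ⟨r₁, fun i => by simp [r₁, norm_smul, hnorm i], fun _ => rfl⟩
  have hscale : tensorLp r = (∏ i, ‖r i‖) • tensorLp r₁ := lp.ext <| funext fun c => by
    simp only [tensorLp_apply, lp.coeFn_smul, Pi.smul_apply, smul_eq_mul, r₁,
      ← Finset.prod_mul_distrib, ← mul_assoc, mul_inv_cancel₀ (hnorm _), one_mul]
  rw [hscale, real_inner_smul_left, abs_mul, abs_of_nonneg (by positivity), mul_comm]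
  exact mul_le_mul_of_nonneg_right (abs_inner_le_normR x hr₁) (by positivity)

lemma ofReal_abs_tsum_mul_prod_le_normR {C D : Type} [Fintype D] (κ : Fin k ≃ D) (x : Hk C k)
    (s : D → C → ℝ) (hs : ∀ d, Memℓp (s d) 2) :
    ENNReal.ofReal |∑' z : D → C, x (z ∘ κ) * ∏ d, s d (z d)| ≤
      ENNReal.ofReal (normR (Rk C k) x) * ∏ d, eL2Norm fun c => ‖s d c‖ₑ := by
  let r : Fin k → l2 C := fun i => ⟨s (κ i), hs (κ i)⟩
  have hinner : ∑' z : D → C, x (z ∘ κ) * ∏ d, s d (z d) = ⟪tensorLp r, x⟫_ℝ := by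
    rw [lp.inner_eq_tsum, ← (Equiv.arrowCongr κ (Equiv.refl C)).tsum_eq]
    refine tsum_congr fun a => ?_
    simp [tensorLp_apply, r, ← κ.prod_comp, Function.comp_def]
  have hnorm : ∏ d, eL2Norm (fun c => ‖s d c‖ₑ) = ENNReal.ofReal (∏ i, ‖r i‖) := by
    rw [ENNReal.ofReal_prod_of_nonneg fun _ _ => norm_nonneg _, ← κ.prod_comp]
    simp only [ofReal_norm, lp.enorm_eq_eL2Norm]
    rfl
  rw [hinner, hnorm, ← ENNReal.ofReal_mul (normR_nonneg _ x)]
  exact ENNReal.ofReal_le_ofReal (abs_inner_tensorLp_le x r)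

end tensor

lemma Memℓp.comp_injective_two {α β : Type*} {f : β → ℝ} (hf : Memℓp f 2) {i : α → β}
    (hi : Function.Injective i) : Memℓp (f ∘ i) 2 := by
  rw [memℓp_two_iff_eL2Norm_ne_top, ← lt_top_iff_ne_top] at hf ⊢
  refine lt_of_le_of_lt ?_ hf
  exact ENNReal.rpow_le_rpow (ENNReal.tsum_comp_le_tsum_of_injective hi fun b => ‖f b‖ₑ ^ 2)
    (by norm_num)

lemma exists_prod_restrict_eq_const_mul_prod {C D W : Type} [Fintype D] [DecidableEq W]
    (S : Finset W) (r : D → W → Prop) (hr : ∀ d, ∃! w, w ∈ S ∧ r d w)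
    (hr₂ : ∀ w ∈ S, ∀ d₁ d₂, r d₁ w → r d₂ w → d₁ = d₂)
    (g : ∀ w, ({d // r d w} → C) → ℝ) (hg : ∀ w ∈ S, Memℓp (g w) 2) (x₀ : D → C) :
    ∃ (c : ℝ) (s : D → C → ℝ), (∀ d, Memℓp (s d) 2) ∧
      (∀ x : D → C, ∏ w ∈ S, g w (fun d => x d) = c * ∏ d, s d (x d)) ∧
      ∏ w ∈ S, eL2Norm (fun z => ‖g w z‖ₑ) =
        ENNReal.ofReal |c| * ∏ d, eL2Norm fun c => ‖s d c‖ₑ := by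
  choose o ho hunique using hr
  have ho_inj : Function.Injective o := fun d₁ d₂ h =>
    hr₂ _ (ho d₂).1 d₁ d₂ (h ▸ (ho d₁).2) (ho d₂).2
  let _ (d : D) : Unique {d' // r d' (o d)} :=
    ⟨⟨⟨d, (ho d).2⟩⟩, fun d' => Subtype.ext (hr₂ _ (ho d).1 _ _ d'.2 (ho d).2)⟩
  have himage : Finset.univ.image o ⊆ S := by
    simp only [Finset.image_subset_iff]
    exact fun d _ => (ho d).1
  have hempty : ∀ w ∈ S \ Finset.univ.image o, IsEmpty {d // r d w} := fun w hw =>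
    ⟨fun d => (Finset.mem_sdiff.1 hw).2 (Finset.mem_image.2 ⟨d, Finset.mem_univ _,
      (hunique d w ⟨(Finset.mem_sdiff.1 hw).1, d.2⟩).symm⟩)⟩
  refine ⟨∏ w ∈ S \ Finset.univ.image o, g w fun d => x₀ d,
    fun d => g (o d) ∘ (Equiv.funUnique _ C).symm,
    fun d => (hg _ (ho d).1).comp_injective_two (Equiv.injective _), fun x => ?_, ?_⟩ <;>
  rw [← Finset.prod_sdiff himage, Finset.prod_image fun d₁ _ d₂ _ h => ho_inj h] <;> congr 1
  · refine Finset.prod_congr rfl fun w hw => ?_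
    have := hempty w hw
    exact congrArg (g w) (Subsingleton.elim _ _)
  · refine Finset.prod_congr rfl fun d _ => congrArg (g (o d)) (funext fun d' => ?_)
    rw [Unique.eq_default d']
    rfl
  · rw [← Real.enorm_eq_ofReal_abs, Real.enorm_finset_prod]
    refine Finset.prod_congr rfl fun w hw => ?_
    have := hempty w hw
    let _ : Unique ({d // r d w} → C) := Pi.uniqueOfIsEmpty _
    rw [eL2Norm_of_unique]
    exact congrArg (fun z => ‖g w z‖ₑ) (Subsingleton.elim _ _)
  · exact Finset.prod_congr rfl fun d _ => (eL2Norm_comp_equiv _ fun z => ‖g (o d) z‖ₑ).symm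

lemma ofReal_abs_tsum_mul_prod_restrict_le {C D W : Type} [Fintype D] [DecidableEq W]
    (S : Finset W) (r : D → W → Prop) (hr : ∀ d, ∃! w, w ∈ S ∧ r d w)
    (hr₂ : ∀ w ∈ S, ∀ d₁ d₂, r d₁ w → r d₂ w → d₁ = d₂) (f : (D → C) → ℝ) (M : ℝ≥0∞)
    (hM : ∀ s : D → C → ℝ, (∀ d, Memℓp (s d) 2) →
      ENNReal.ofReal |∑' x, f x * ∏ d, s d (x d)| ≤ M * ∏ d, eL2Norm fun c => ‖s d c‖ₑ)
    (g : ∀ w, ({d // r d w} → C) → ℝ) (hg : ∀ w ∈ S, Memℓp (g w) 2) :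
    ENNReal.ofReal |∑' x : D → C, f x * ∏ w ∈ S, g w fun d => x d| ≤
      M * ∏ w ∈ S, eL2Norm fun z => ‖g w z‖ₑ := by
  rcases isEmpty_or_nonempty (D → C) with hC | ⟨⟨x₀⟩⟩
  · simp
  obtain ⟨c, s, hs, hval, hnorm⟩ := exists_prod_restrict_eq_const_mul_prod S r hr hr₂ g hg x₀
  simp_rw [hval, mul_left_comm (f _), tsum_mul_left, abs_mul, hnorm]
  rw [ENNReal.ofReal_mul (abs_nonneg _), mul_left_comm]
  exact mul_le_mul_right (hM s hs) _

lemma ENNReal.ofReal_tsum_le_tsum_ofReal_abs {β : Type*} (a : β → ℝ) :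
    ENNReal.ofReal (∑' b, a b) ≤ ∑' b, ENNReal.ofReal |a b| := by
  by_cases ha : Summable a
  · rw [← ENNReal.ofReal_tsum_of_nonneg (fun b => abs_nonneg _) ha.abs]
    exact ENNReal.ofReal_le_ofReal (ha.tsum_le_tsum (fun b => le_abs_self _) ha.abs)
  · simp [tsum_eq_zero_of_not_summable ha]

lemma Sym2.existsUnique_mem_of_not_isDiag {V : Type*} [DecidableEq V] {z : Sym2 V}
    (hz : ¬ z.IsDiag) {u : V} (hu : u ∈ z) {S : Finset V} (huS : u ∉ S)
    (hS : ∀ v ∈ z, v ∈ insert u S) : ∃! w, w ∈ S ∧ w ∈ z := by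
  have hne := Sym2.other_ne hz hu
  refine ⟨Sym2.Mem.other hu, ⟨?_, Sym2.other_mem hu⟩, fun w ⟨hwS, hw⟩ => ?_⟩
  · exact (Finset.mem_insert.1 (hS _ (Sym2.other_mem hu))).resolve_left hne
  · rw [← Sym2.other_spec hu, Sym2.mem_iff] at hw
    exact hw.resolve_left fun h => huS (h ▸ hwS)

lemma Function.Injective.eq_of_mem_sym2 {V E : Type*} {ends : E → Sym2 V}
    (hinj : Function.Injective ends) {u w : V} (hne : u ≠ w) {e₁ e₂ : E}
    (h₁ : u ∈ ends e₁ ∧ w ∈ ends e₁) (h₂ : u ∈ ends e₂ ∧ w ∈ ends e₂) : e₁ = e₂ :=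
  hinj (((Sym2.mem_and_mem_iff hne).1 h₁).trans ((Sym2.mem_and_mem_iff hne).1 h₂).symm)

def restrictSplit {E C : Type*} (p q : E → Prop) [DecidablePred q] :
    ({e // p e} → C) ≃ ({e : {e // ¬ q e} // p e.1} → C) × ({e : {e // q e} // p e.1} → C) where
  toFun t := (fun e => t ⟨e.1.1, e.2⟩, fun e => t ⟨e.1.1, e.2⟩)
  invFun t e := if h : q e.1 then t.2 ⟨⟨e.1, h⟩, e.2⟩ else t.1 ⟨⟨e.1, h⟩, e.2⟩
  left_inv t := by
    funext e
    by_cases h : q e.1 <;> simp [h]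
  right_inv t := by
    ext e
    · simp [e.1.2]
    · simp [e.1.2]

lemma restrictSplit_symm_restrict {E C : Type*} (p q : E → Prop) [DecidablePred q]
    (ψ : E → C) :
    (restrictSplit p q).symm (fun e => ψ e.1.1, fun e => ψ e.1.1) = fun e : {e // p e} => ψ e :=
  (restrictSplit p q).symm_apply_apply fun e : {e // p e} => ψ e

lemma ENNReal.tsum_pi_eq_tsum_tsum_restrict {E C : Type*} (q : E → Prop) [DecidablePred q]
    (H : ({e // ¬ q e} → C) → ({e // q e} → C) → ℝ≥0∞) :
    ∑' ψ : E → C, H (fun e => ψ e) (fun e => ψ e) = ∑' (y) (x), H y x := by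
  rw [ENNReal.tsum_comm, ← ENNReal.tsum_prod]
  exact (Equiv.piEquivPiSubtypeProd q fun _ => C).tsum_eq fun p => H p.2 p.1

lemma Summable.tsum_pi_eq_tsum_tsum_restrict {E C : Type*} (q : E → Prop) [DecidablePred q]
    (H : ({e // ¬ q e} → C) → ({e // q e} → C) → ℝ)
    (hH : Summable fun ψ : E → C => H (fun e => ψ e) (fun e => ψ e)) :
    ∑' ψ : E → C, H (fun e => ψ e) (fun e => ψ e) = ∑' (y) (x), H y x := by
  let e := (Equiv.piEquivPiSubtypeProd q fun _ => C).trans (Equiv.prodComm _ _)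
  have hH' : Summable fun p : ({e // ¬ q e} → C) × ({e // q e} → C) => H p.1 p.2 :=
    e.summable_iff.1 hH
  exact (e.tsum_eq fun p => H p.1 p.2).trans (hH'.tsum_prod' hH'.prod_factor)

lemma ENNReal.ofReal_tsum_pi_le_tsum_ofReal_abs_tsum {E C : Type*} (q : E → Prop)
    [DecidablePred q] (H : ({e // ¬ q e} → C) → ({e // q e} → C) → ℝ) :
    ENNReal.ofReal (∑' ψ : E → C, H (fun e => ψ e) (fun e => ψ e)) ≤
      ∑' y, ENNReal.ofReal |∑' x, H y x| := by
  by_cases hH : Summable fun ψ : E → C => H (fun e => ψ e) (fun e => ψ e)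
  · rw [Summable.tsum_pi_eq_tsum_tsum_restrict q H hH]
    exact ENNReal.ofReal_tsum_le_tsum_ofReal_abs _
  · simp [tsum_eq_zero_of_not_summable hH]

theorem tsum_prod_le_prod_eL2Norm {C V : Type} [DecidableEq V] {E : Type} (ends : E → Sym2 V)
    (hloop : ∀ e, ¬ (ends e).IsDiag) (S : Finset V) (hS : ∀ e, ∀ v ∈ ends e, v ∈ S)
    (G : ∀ v, ({e // v ∈ ends e} → C) → ℝ≥0∞) :
    ∑' ψ : E → C, ∏ v ∈ S, G v (fun e => ψ e) ≤ ∏ v ∈ S, eL2Norm (G v) := by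
  classical
  induction S using Finset.induction_on generalizing E with
  | empty =>
    have : IsEmpty E := ⟨fun e => by simpa using hS e _ (ends e).out_fst_mem⟩
    simp
  | insert u S hu ih =>
    let Ξ v := restrictSplit (C := C) (fun e => v ∈ ends e) (fun e => u ∈ ends e)
    let P (y : {e // u ∉ ends e} → C) (x : {e // u ∈ ends e} → C) : ℝ≥0∞ :=
      ∏ v ∈ S, G v ((Ξ v).symm (fun e => y e.1, fun e => x e.1))
    let Gh v (z : {e : {e // u ∉ ends e} // v ∈ ends e.1} → C) : ℝ≥0∞ :=
      eL2Norm fun w => G v ((Ξ v).symm (z, w))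
    have hS' (e : {e // u ∉ ends e}) (v) (hv : v ∈ ends e.1) : v ∈ S :=
      (Finset.mem_insert.1 (hS e.1 v hv)).resolve_left fun h => e.2 (h ▸ hv)
    have hP (y) : eL2Norm (P y) = ∏ v ∈ S, Gh v fun e => y e.1 :=
      eL2Norm_prod_restrict S (fun (e : {e // u ∈ ends e}) v => v ∈ ends e.1)
        (fun e => Sym2.existsUnique_mem_of_not_isDiag (hloop e.1) e.2 hu (hS e.1))
        fun v w => G v ((Ξ v).symm (fun e => y e.1, w))
    calc ∑' ψ : E → C, ∏ v ∈ insert u S, G v (fun e => ψ e)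
        = ∑' ψ : E → C, G u (fun e => ψ e) * P (fun e => ψ e) (fun e => ψ e) := by
          simp only [Finset.prod_insert hu, P, Ξ, restrictSplit_symm_restrict]
      _ = ∑' (y) (x), G u x * P y x :=
          ENNReal.tsum_pi_eq_tsum_tsum_restrict (fun e => u ∈ ends e) fun y x => G u x * P y x
      _ ≤ ∑' y, eL2Norm (G u) * eL2Norm (P y) :=
          ENNReal.tsum_le_tsum fun y => ENNReal.tsum_mul_le_eL2Norm_mul (G u) (P y)
      _ = eL2Norm (G u) * ∑' y : {e // u ∉ ends e} → C, ∏ v ∈ S, Gh v fun e => y e.1 := by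
          simp only [hP, ENNReal.tsum_mul_left]
      _ ≤ eL2Norm (G u) * ∏ v ∈ S, eL2Norm (Gh v) :=
          mul_le_mul_right (ih (fun e : {e // u ∉ ends e} => ends e.1) (fun e => hloop e.1)
            hS' Gh) _
      _ = ∏ v ∈ insert u S, eL2Norm (G v) := by
          rw [Finset.prod_insert hu]
          exact congrArg _ (Finset.prod_congr rfl fun v _ => eL2Norm_curry (Ξ v) (G v))

theorem ofReal_tsum_mul_prod_le {C V E : Type} [DecidableEq V] [Fintype E] (ends : E → Sym2 V)
    (hloop : ∀ e, ¬ (ends e).IsDiag) (hinj : Function.Injective ends) (u : V) (S : Finset V)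
    (hu : u ∉ S) (hS : ∀ e, ∀ v ∈ ends e, v ∈ insert u S)
    (f : ({e // u ∈ ends e} → C) → ℝ) (M : ℝ≥0∞)
    (hM : ∀ s : {e // u ∈ ends e} → C → ℝ, (∀ d, Memℓp (s d) 2) →
      ENNReal.ofReal |∑' x, f x * ∏ d, s d (x d)| ≤ M * ∏ d, eL2Norm fun c => ‖s d c‖ₑ)
    (g : ∀ v, ({e // v ∈ ends e} → C) → ℝ) (hg : ∀ v ∈ S, Memℓp (g v) 2) :
    ENNReal.ofReal (∑' ψ : E → C, f (fun e => ψ e) * ∏ v ∈ S, g v (fun e => ψ e)) ≤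
      M * ∏ v ∈ S, eL2Norm fun z => ‖g v z‖ₑ := by
  let Ξ v := restrictSplit (C := C) (fun e => v ∈ ends e) (fun e => u ∈ ends e)
  let slice v (y : {e : {e // u ∉ ends e} // v ∈ ends e.1} → C) w := g v ((Ξ v).symm (y, w))
  let T (y : {e // u ∉ ends e} → C) (x : {e // u ∈ ends e} → C) : ℝ :=
    f x * ∏ v ∈ S, slice v (fun e => y e.1) fun e => x e.1
  let Gh v (y : {e : {e // u ∉ ends e} // v ∈ ends e.1} → C) : ℝ≥0∞ :=
    eL2Norm fun w => ‖slice v y w‖ₑ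
  have hslice (v) (hv : v ∈ S) (y) : Memℓp (slice v y) 2 :=
    (hg v hv).comp_injective_two ((Ξ v).symm.injective.comp (Prod.mk_right_injective y))
  have hS' (e : {e // u ∉ ends e}) (v) (hv : v ∈ ends e.1) : v ∈ S :=
    (Finset.mem_insert.1 (hS e.1 v hv)).resolve_left fun h => e.2 (h ▸ hv)
  have hfiber (d : {e // u ∈ ends e}) : ∃! w, w ∈ S ∧ w ∈ ends d.1 :=
    Sym2.existsUnique_mem_of_not_isDiag (hloop d.1) d.2 hu (hS d.1)
  have hsimple (w) (hw : w ∈ S) (d₁ d₂ : {e // u ∈ ends e}) (h₁ : w ∈ ends d₁.1)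
      (h₂ : w ∈ ends d₂.1) : d₁ = d₂ :=
    Subtype.ext (hinj.eq_of_mem_sym2 (fun h : u = w => hu (h ▸ hw)) ⟨d₁.2, h₁⟩ ⟨d₂.2, h₂⟩)
  calc ENNReal.ofReal (∑' ψ : E → C, f (fun e => ψ e) * ∏ v ∈ S, g v (fun e => ψ e))
      = ENNReal.ofReal (∑' ψ : E → C, T (fun e => ψ e) (fun e => ψ e)) := by
        simp only [T, slice, Ξ, restrictSplit_symm_restrict]
    _ ≤ ∑' y, ENNReal.ofReal |∑' x, T y x| :=
        ENNReal.ofReal_tsum_pi_le_tsum_ofReal_abs_tsum (fun e => u ∈ ends e) T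
    _ ≤ ∑' y : {e // u ∉ ends e} → C, M * ∏ v ∈ S, Gh v fun e => y e.1 :=
        ENNReal.tsum_le_tsum fun y => ofReal_abs_tsum_mul_prod_restrict_le S
          (fun (d : {e // u ∈ ends e}) w => w ∈ ends d.1) hfiber hsimple f M hM
          (fun v => slice v fun e => y e.1) fun v hv => hslice v hv _
    _ ≤ M * ∏ v ∈ S, eL2Norm (Gh v) := by
        rw [ENNReal.tsum_mul_left]
        exact mul_le_mul_right (tsum_prod_le_prod_eL2Norm (fun e : {e // u ∉ ends e} => ends e.1)
          (fun e => hloop e.1) S hS' Gh) M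
    _ = M * ∏ v ∈ S, eL2Norm fun z => ‖g v z‖ₑ :=
        congrArg _ (Finset.prod_congr rfl fun v _ => eL2Norm_curry (Ξ v) fun z => ‖g v z‖ₑ)

def IsEnum.equiv {V : Type} [Fintype V] [DecidableEq V] {F : SimpleGraph V} [DecidableRel F.Adj]
    {δ : ∀ v : V, Fin (F.degree v) → F.edgeSet} (hδ : IsEnum F δ) (v : V) :
    Fin (F.degree v) ≃ {e : F.edgeSet // v ∈ (e : Sym2 V)} :=
  Equiv.ofBijective (fun i => ⟨δ v i, ((hδ v).2 _).2 ⟨i, rfl⟩⟩)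
    ⟨fun _ _ hij => (hδ v).1 (congrArg Subtype.val hij), fun e =>
      let ⟨i, hi⟩ := ((hδ v).2 e.1).1 e.2
      ⟨i, Subtype.ext hi⟩⟩

theorem stmt11_general (C : Type) {V : Type} [Fintype V] [DecidableEq V] (F : SimpleGraph V)
    [DecidableRel F.Adj]
    (δ : ∀ v : V, Fin (F.degree v) → F.edgeSet) (hδ : IsEnum F δ)
    (h : ∀ v : V, Hk C (F.degree v)) (u : V) :
    piF F δ h ≤ normR (Rk C (F.degree u)) (h u) * ∏ v ∈ Finset.univ.erase u, ‖h v‖ := by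
  let κ := hδ.equiv
  let g v (z : {e : F.edgeSet // v ∈ (e : Sym2 V)} → C) : ℝ := h v (z ∘ κ v)
  have hpiF : piF F δ h =
      ∑' φ : F.edgeSet → C, g u (fun e => φ e) * ∏ v ∈ Finset.univ.erase u, g v fun e => φ e := by
    simp only [piF, ← Finset.mul_prod_erase _ _ (Finset.mem_univ u)]
    rfl
  have hg (v : V) : Memℓp (g v) 2 :=
    (lp.memℓp (h v)).comp_injective_two (κ v).surjective.injective_comp_right
  have hnorm (v : V) : eL2Norm (fun z => ‖g v z‖ₑ) = ENNReal.ofReal ‖h v‖ := by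
    rw [ofReal_norm, lp.enorm_eq_eL2Norm]
    exact eL2Norm_comp_equiv (Equiv.arrowCongr (κ v).symm (Equiv.refl C)) fun a => ‖h v a‖ₑ
  have key := ofReal_tsum_mul_prod_le (fun e : F.edgeSet => (e : Sym2 V))
    (fun e => F.not_isDiag_of_mem_edgeSet e.2) Subtype.coe_injective u (Finset.univ.erase u)
    (Finset.notMem_erase u _) (by simp) (g u) _
    (fun s hs => ofReal_abs_tsum_mul_prod_le_normR (κ u) (h u) s hs) g fun v _ => hg v
  rw [← hpiF, Finset.prod_congr rfl fun v _ => hnorm v,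
    ← ENNReal.ofReal_prod_of_nonneg fun v _ => norm_nonneg _,
    ← ENNReal.ofReal_mul (normR_nonneg _ _)] at key
  exact (ENNReal.ofReal_le_ofReal_iff
    (mul_nonneg (normR_nonneg _ _) (Finset.prod_nonneg fun v _ => norm_nonneg _))).1 key

/-- For a finite simple graph `F`, `h_v ∈ H_{deg v}^{S_{deg v}}` for each
vertex `v`, and a vertex `u`:
`π_F(h) ≤ ‖h_u‖_{R_{deg u}} · ∏_{v ≠ u} ‖h_v‖`. -/
theorem stmt11 (C : Type) {V : Type} [Fintype V] [DecidableEq V] (F : SimpleGraph V)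
    [DecidableRel F.Adj]
    (δ : ∀ v : V, Fin (F.degree v) → F.edgeSet) (hδ : IsEnum F δ)
    (h : ∀ v : V, Hk C (F.degree v)) (hinv : ∀ v, SkInv (h v)) (u : V) :
    piF F δ h ≤ normR (Rk C (F.degree u)) (h u) * ∏ v ∈ Finset.univ.erase u, ‖h v‖ :=
  stmt11_general C F δ hδ h u
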